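/- arXiv:math/9906069 — 3 statements merged into one kernel-verified Lean document; each statement's English description precedes it below -/
import Mathlib

section
/- Fix n ≥ 2 and a dimension vector γ ∈ ℕ^{Z/nZ}. The number of cyclic multisegments of dimension γ equals ∑_{k ≥ 0, β} p(k) · (number of aperiodic multisegments of dimension β), the sum being over all k ∈ ℕ and β ∈ ℕ^{Z/nZ} with k·(1,1,…,1) + β = γ, where p(k) is the number of partitions of k. -/
/-- A cyclic multisegment: multiplicities `a l i` of the cyclic segment of length `l ≥ 1`
starting at residue `i` (no segments of length 0, finite support). -/
def IsMultiseg (n : ℕ) (a : ℕ → ZMod n → ℕ) : Prop :=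
  (∀ i, a 0 i = 0) ∧ { q : ℕ × ZMod n | a q.1 q.2 ≠ 0 }.Finite

/-- The dimension vector of a cyclic multisegment. -/
noncomputable def msegDim (n : ℕ) [NeZero n] (a : ℕ → ZMod n → ℕ) (j : ZMod n) : ℕ :=
  ∑ᶠ l : ℕ, ∑ i : ZMod n,
    a l i * ((Finset.range l).filter fun t : ℕ => i + (t : ZMod n) = j).card

/-- Aperiodicity: for each length there is a residue with multiplicity zero. -/
def IsAperiodic (n : ℕ) (a : ℕ → ZMod n → ℕ) : Prop :=
  ∀ l : ℕ, 1 ≤ l → ∃ i : ZMod n, a l i = 0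

open Finset

set_option linter.unusedSectionVars false

namespace Stmt6Aux

variable (n : ℕ) [NeZero n]

/-- multiplicity of residue j in segment of length l starting at i -/
def seg (l : ℕ) (i j : ZMod n) : ℕ :=
  ((Finset.range l).filter fun t : ℕ => i + (t : ZMod n) = j).card

lemma msegDim_eq (a : ℕ → ZMod n → ℕ) (j : ZMod n) :
    msegDim n a j = ∑ᶠ l : ℕ, ∑ i : ZMod n, a l i * seg n l i j := rfl

lemma sum_seg_left (l : ℕ) (j : ZMod n) : ∑ i : ZMod n, seg n l i j = l := by
  classical
  simp only [seg, Finset.card_filter]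
  rw [Finset.sum_comm]
  have h : ∀ t ∈ Finset.range l,
      (∑ i : ZMod n, if i + (t : ZMod n) = j then 1 else 0) = 1 := by
    intro t _
    have : ∀ i : ZMod n, (i + (t : ZMod n) = j) = (i = j - t) :=
      fun i => propext (eq_sub_iff_add_eq).symm
    simp only [this]
    simp
  rw [Finset.sum_congr rfl h]
  simp

lemma sum_seg_right (l : ℕ) (i : ZMod n) : ∑ j : ZMod n, seg n l i j = l := by
  classical
  simp only [seg, Finset.card_filter]
  rw [Finset.sum_comm]
  have h : ∀ t ∈ Finset.range l,
      (∑ j : ZMod n, if i + (t : ZMod n) = j then 1 else 0) = 1 := by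
    intro t _; simp
  rw [Finset.sum_congr rfl h]
  simp

/-- bound on the support of a multisegment -/
lemma exists_bound {a : ℕ → ZMod n → ℕ} (h : IsMultiseg n a) :
    ∃ L : ℕ, ∀ l, L ≤ l → ∀ i, a l i = 0 := by
  classical
  refine ⟨(h.2.toFinset.image Prod.fst).sup id + 1, fun l hl i => ?_⟩
  by_contra hne
  have hmem : (l, i) ∈ h.2.toFinset := by simp [hne]
  have : l ≤ (h.2.toFinset.image Prod.fst).sup id :=
    Finset.le_sup (f := id) (Finset.mem_image_of_mem Prod.fst hmem)
  omega

lemma dim_eq_sum {a : ℕ → ZMod n → ℕ} {L : ℕ} (hL : ∀ l, L ≤ l → ∀ i, a l i = 0)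
    (j : ZMod n) :
    msegDim n a j = ∑ l ∈ Finset.range L, ∑ i : ZMod n, a l i * seg n l i j := by
  rw [msegDim_eq]
  apply finsum_eq_sum_of_support_subset
  intro l hl
  simp only [Function.mem_support, ne_eq] at hl
  by_contra hmem
  simp only [Finset.coe_range, Set.mem_Iio, not_lt] at hmem
  exact hl (by simp [hL l hmem])

lemma dim_add {a b : ℕ → ZMod n → ℕ} {L : ℕ}
    (hLa : ∀ l, L ≤ l → ∀ i, a l i = 0) (hLb : ∀ l, L ≤ l → ∀ i, b l i = 0)
    (j : ZMod n) :
    msegDim n (fun l i => a l i + b l i) j = msegDim n a j + msegDim n b j := by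
  rw [dim_eq_sum n hLa j, dim_eq_sum n hLb j,
    dim_eq_sum n (a := fun l i => a l i + b l i) (L := L)
      (fun l hl i => by simp [hLa l hl, hLb l hl]) j]
  rw [← Finset.sum_add_distrib]
  refine Finset.sum_congr rfl fun l _ => ?_
  rw [← Finset.sum_add_distrib]
  exact Finset.sum_congr rfl fun i _ => by ring

lemma dim_const {m : ℕ → ℕ} {L : ℕ} (hL : ∀ l, L ≤ l → m l = 0) (j : ZMod n) :
    msegDim n (fun l _ => m l) j = ∑ l ∈ Finset.range L, m l * l := by
  rw [dim_eq_sum n (a := fun l _ => m l) (L := L) (fun l hl i => hL l hl) j]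
  refine Finset.sum_congr rfl fun l _ => ?_
  rw [← Finset.mul_sum, sum_seg_left]

lemma total_dim {a : ℕ → ZMod n → ℕ} {L : ℕ} (hL : ∀ l, L ≤ l → ∀ i, a l i = 0) :
    ∑ j : ZMod n, msegDim n a j = ∑ l ∈ Finset.range L, ∑ i : ZMod n, a l i * l := by
  have : ∀ j : ZMod n, msegDim n a j
      = ∑ l ∈ Finset.range L, ∑ i : ZMod n, a l i * seg n l i j :=
    fun j => dim_eq_sum n hL j
  rw [Finset.sum_congr rfl fun j _ => this j, Finset.sum_comm]
  refine Finset.sum_congr rfl fun l _ => ?_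
  rw [Finset.sum_comm]
  refine Finset.sum_congr rfl fun i _ => ?_
  rw [← Finset.mul_sum, sum_seg_right]

/-- each multiplicity-times-length is bounded by the total dimension -/
lemma mult_mul_le {a : ℕ → ZMod n → ℕ} {γ : ZMod n → ℕ}
    (h : IsMultiseg n a) (hd : msegDim n a = γ) (l : ℕ) (i : ZMod n) :
    a l i * l ≤ ∑ j : ZMod n, γ j := by
  obtain ⟨L, hL⟩ := exists_bound n h
  have hL' : ∀ l', max L (l + 1) ≤ l' → ∀ i, a l' i = 0 :=
    fun l' hl' i => hL l' (le_trans (le_max_left _ _) hl') i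
  have htot := total_dim n hL'
  rw [hd] at htot
  rw [htot]
  have hmem : l ∈ Finset.range (max L (l + 1)) := by
    simp [Nat.lt_of_lt_of_le (Nat.lt_succ_self l) (le_max_right _ _)]
  calc a l i * l ≤ ∑ i' : ZMod n, a l i' * l :=
        Finset.single_le_sum (f := fun i' => a l i' * l) (fun _ _ => Nat.zero_le _)
          (Finset.mem_univ i)
    _ ≤ ∑ l' ∈ Finset.range (max L (l + 1)), ∑ i' : ZMod n, a l' i' * l' :=
        Finset.single_le_sum (f := fun l' => ∑ i' : ZMod n, a l' i' * l')
          (fun _ _ => Nat.zero_le _) hmem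

lemma mult_le {a : ℕ → ZMod n → ℕ} {γ : ZMod n → ℕ}
    (h : IsMultiseg n a) (hd : msegDim n a = γ) (l : ℕ) (i : ZMod n) :
    a l i ≤ ∑ j : ZMod n, γ j := by
  rcases Nat.eq_zero_or_pos l with rfl | hl
  · simp [h.1 i]
  · have := mult_mul_le n h hd l i
    calc a l i = a l i * 1 := by ring
      _ ≤ a l i * l := Nat.mul_le_mul_left _ hl
      _ ≤ _ := this

lemma mult_vanish {a : ℕ → ZMod n → ℕ} {γ : ZMod n → ℕ}
    (h : IsMultiseg n a) (hd : msegDim n a = γ) (l : ℕ) (i : ZMod n)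
    (hl : (∑ j : ZMod n, γ j) < l) : a l i = 0 := by
  by_contra hne
  have h1 : 1 ≤ a l i := Nat.one_le_iff_ne_zero.mpr hne
  have := mult_mul_le n h hd l i
  nlinarith

/-- finiteness of the set of multisegments of given dimension -/
lemma finite_dimset (γ : ZMod n → ℕ) :
    {a : ℕ → ZMod n → ℕ | IsMultiseg n a ∧ msegDim n a = γ}.Finite := by
  classical
  set T := ∑ j : ZMod n, γ j with hT
  set Φ : (ℕ → ZMod n → ℕ) → (Fin (T + 1) → ZMod n → Fin (T + 1)) :=
    fun a l i => ⟨min (a l.1 i) T, Nat.lt_succ_of_le (Nat.min_le_right _ _)⟩ with hΦ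
  apply Set.Finite.of_finite_image (f := Φ) (Set.toFinite _)
  intro a ha b hb hab
  have key : ∀ (c : ℕ → ZMod n → ℕ),
      (IsMultiseg n c ∧ msegDim n c = γ) → ∀ l i, c l i ≤ T := by
    intro c hc l i; exact mult_le n hc.1 hc.2 l i
  funext l i
  rcases le_or_gt l T with hle | hlt
  · have := congrFun (congrFun hab ⟨l, Nat.lt_succ_of_le hle⟩) i
    have h1 : min (a l i) T = a l i := Nat.min_eq_left (key a ha l i)
    have h2 : min (b l i) T = b l i := Nat.min_eq_left (key b hb l i)
    simpa [hΦ, h1, h2] using congrArg Fin.val this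
  · rw [mult_vanish n ha.1 ha.2 l i hlt, mult_vanish n hb.1 hb.2 l i hlt]

/-- minimal multiplicity over the cycle -/
noncomputable def mp (a : ℕ → ZMod n → ℕ) (l : ℕ) : ℕ := sInf (Set.range (a l))

lemma mp_le (a : ℕ → ZMod n → ℕ) (l : ℕ) (i : ZMod n) : mp n a l ≤ a l i :=
  Nat.sInf_le ⟨i, rfl⟩

lemma mp_mem (a : ℕ → ZMod n → ℕ) (l : ℕ) : ∃ i : ZMod n, a l i = mp n a l := by
  have : (Set.range (a l)).Nonempty := ⟨a l 0, ⟨0, rfl⟩⟩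
  obtain ⟨i, hi⟩ := Nat.sInf_mem this
  exact ⟨i, hi⟩

lemma mp_eq_zero_of {a : ℕ → ZMod n → ℕ} {l : ℕ} (i : ZMod n) (h : a l i = 0) :
    mp n a l = 0 := Nat.le_zero.mp (h ▸ mp_le n a l i)

/-- adding a constant (in `i`) to a function attaining `0` shifts the min by that constant -/
lemma mp_add_const {b : ℕ → ZMod n → ℕ} {c : ℕ → ℕ} {l : ℕ} (i₀ : ZMod n)
    (h : b l i₀ = 0) :
    mp n (fun l' i => b l' i + c l') l = c l := by
  apply le_antisymm
  · have := mp_le n (fun l' i => b l' i + c l') l i₀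
    simpa [h] using this
  · obtain ⟨i, hi⟩ := mp_mem n (fun l' i => b l' i + c l') l
    rw [← hi]
    exact Nat.le_add_left _ _

/-- sum of a finset-sum of multisets -/
lemma sum_finset_sum_multiset (t : Finset ℕ) (M : ℕ → Multiset ℕ) :
    (∑ l ∈ t, M l).sum = ∑ l ∈ t, (M l).sum := by
  classical
  induction t using Finset.cons_induction with
  | empty => simp
  | cons a s ha ih => rw [Finset.sum_cons, Finset.sum_cons, Multiset.sum_add, ih]

lemma multiset_count_decomp (s : Multiset ℕ) (N : ℕ) (h : ∀ x ∈ s, x < N) :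
    ∑ l ∈ Finset.range N, Multiset.replicate (s.count l) l = s := by
  classical
  ext x
  rw [Multiset.count_sum']
  simp only [Multiset.count_replicate]
  rcases lt_or_ge x N with hx | hx
  · rw [Finset.sum_ite_eq' (Finset.range N) x (fun l => s.count l)]
    simp [hx]
  · have h1 : s.count x = 0 :=
      Multiset.count_eq_zero_of_notMem fun hxs => absurd (h x hxs) (not_lt.mpr hx)
    rw [h1, Finset.sum_eq_zero]
    intro l hl
    rw [if_neg]
    rintro rfl
    exact absurd (Finset.mem_range.mp hl) (not_lt.mpr hx)

lemma multiset_sum_count (s : Multiset ℕ) (N : ℕ) (h : ∀ x ∈ s, x < N) :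
    ∑ l ∈ Finset.range N, s.count l * l = s.sum := by
  conv_rhs => rw [← multiset_count_decomp s N h]
  rw [sum_finset_sum_multiset]
  refine Finset.sum_congr rfl fun l _ => ?_
  rw [Multiset.sum_replicate, smul_eq_mul]

/-- the "periodic weight" of a multisegment, truncated at length T -/
noncomputable def kval (T : ℕ) (a : ℕ → ZMod n → ℕ) : ℕ :=
  ∑ l ∈ Finset.range (T + 1), mp n a l * l

/-- the aperiodic part of a multisegment -/
noncomputable def aperPart (a : ℕ → ZMod n → ℕ) : ℕ → ZMod n → ℕ :=
  fun l i => a l i - mp n a l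

/-- adding a completely periodic multisegment -/
def addPer (b : ℕ → ZMod n → ℕ) (c : ℕ → ℕ) : ℕ → ZMod n → ℕ :=
  fun l i => b l i + c l

/-- the multiset of parts of the periodic component -/
noncomputable def partsOf (T : ℕ) (a : ℕ → ZMod n → ℕ) : Multiset ℕ :=
  ∑ l ∈ Finset.range (T + 1), Multiset.replicate (mp n a l) l

lemma partsOf_count {T : ℕ} {a : ℕ → ZMod n → ℕ}
    (h : ∀ l', T < l' → mp n a l' = 0) (l : ℕ) :
    (partsOf n T a).count l = mp n a l := by
  classical
  rw [partsOf, Multiset.count_sum']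
  simp only [Multiset.count_replicate]
  rcases lt_or_ge l (T + 1) with hl | hl
  · rw [Finset.sum_ite_eq' (Finset.range (T + 1)) l (fun l' => mp n a l')]
    simp [hl]
  · rw [h l (by omega), Finset.sum_eq_zero]
    intro l' hl'
    rw [if_neg]
    rintro rfl
    exact absurd (Finset.mem_range.mp hl') (by omega)

lemma partsOf_sum {T : ℕ} (a : ℕ → ZMod n → ℕ) :
    (partsOf n T a).sum = kval n T a := by
  rw [partsOf, sum_finset_sum_multiset, kval]
  refine Finset.sum_congr rfl fun l _ => ?_
  rw [Multiset.sum_replicate, smul_eq_mul]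

lemma parts_count_bound {k l : ℕ} (p : Nat.Partition k) (hl : k < l) :
    p.parts.count l = 0 := by
  apply Multiset.count_eq_zero_of_notMem
  intro hmem
  have : l ≤ p.parts.sum :=
    Multiset.single_le_sum (fun x _ => Nat.zero_le x) l hmem
  rw [p.parts_sum] at this
  omega

lemma parts_count_zero {k : ℕ} (p : Nat.Partition k) : p.parts.count 0 = 0 := by
  apply Multiset.count_eq_zero_of_notMem
  intro hmem
  exact absurd (p.parts_pos hmem) (lt_irrefl 0)

/-- the key fiberwise counting lemma -/
lemma card_fiber (γ : ZMod n → ℕ) (k : ℕ) (hk : k ≤ ∑ j : ZMod n, γ j) :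
    {a : ℕ → ZMod n → ℕ | (IsMultiseg n a ∧ msegDim n a = γ) ∧
        kval n (∑ j : ZMod n, γ j) a = k}.ncard
      = Fintype.card (Nat.Partition k) *
        {a : ℕ → ZMod n → ℕ | IsMultiseg n a ∧ IsAperiodic n a ∧
            ∀ j : ZMod n, msegDim n a j + k = γ j}.ncard := by
  classical
  set T := ∑ j : ZMod n, γ j with hTdef
  -- facts about elements of the fiber
  have hvan : ∀ a : ℕ → ZMod n → ℕ, IsMultiseg n a → msegDim n a = γ →
      ∀ l, T < l → ∀ i, a l i = 0 := fun a h1 h2 l hl i => mult_vanish n h1 h2 l i hl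
  have hmpvan : ∀ a : ℕ → ZMod n → ℕ, IsMultiseg n a → msegDim n a = γ →
      ∀ l, T < l → mp n a l = 0 :=
    fun a h1 h2 l hl => mp_eq_zero_of n 0 (hvan a h1 h2 l hl 0)
  -- forward : mp decomposition facts
  have hdecomp : ∀ a : ℕ → ZMod n → ℕ,
      addPer n (aperPart n a) (fun l => mp n a l) = a := by
    intro a
    funext l i
    exact Nat.sub_add_cancel (mp_le n a l i)
  have haperMS : ∀ a : ℕ → ZMod n → ℕ, IsMultiseg n a → IsMultiseg n (aperPart n a) := by
    intro a ha
    constructor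
    · intro i; simp [aperPart, ha.1 i]
    · apply ha.2.subset
      intro q hq
      simp only [Set.mem_setOf_eq, aperPart] at hq ⊢
      intro h0
      rw [h0] at hq
      simp at hq
  have haperAP : ∀ a : ℕ → ZMod n → ℕ, ∀ l, ∃ i, aperPart n a l i = 0 := by
    intro a l
    obtain ⟨i, hi⟩ := mp_mem n a l
    exact ⟨i, by simp [aperPart, hi]⟩
  -- dimension of periodic additions
  have hdims : ∀ (b : ℕ → ZMod n → ℕ) (c : ℕ → ℕ) (L : ℕ),
      (∀ l, L ≤ l → ∀ i, b l i = 0) → (∀ l, L ≤ l → c l = 0) → ∀ j,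
      msegDim n (addPer n b c) j = msegDim n b j + ∑ l ∈ Finset.range L, c l * l := by
    intro b c L hb hc j
    have h1 : msegDim n (fun l i => b l i + (fun l _ => c l) l i) j
        = msegDim n b j + msegDim n (fun l (_ : ZMod n) => c l) j :=
      dim_add n hb (fun l hl i => hc l hl) j
    show msegDim n (fun l i => b l i + (fun l (_ : ZMod n) => c l) l i) j = _
    rw [h1, dim_const n hc j]
  -- forward direction
  have hforward : ∀ a : ℕ → ZMod n → ℕ,
      (IsMultiseg n a ∧ msegDim n a = γ) ∧ kval n T a = k →
      IsMultiseg n (aperPart n a) ∧ IsAperiodic n (aperPart n a) ∧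
        ∀ j, msegDim n (aperPart n a) j + k = γ j := by
    rintro a ⟨⟨hms, hdim⟩, hkv⟩
    refine ⟨haperMS a hms, fun l _ => haperAP a l, fun j => ?_⟩
    have hbound : ∀ l, T + 1 ≤ l → ∀ i, a l i = 0 :=
      fun l hl i => hvan a hms hdim l (by omega) i
    have hboundAper : ∀ l, T + 1 ≤ l → ∀ i, aperPart n a l i = 0 := by
      intro l hl i; simp [aperPart, hbound l hl i]
    have hboundmp : ∀ l, T + 1 ≤ l → mp n a l = 0 :=
      fun l hl => hmpvan a hms hdim l (by omega)
    have hsplit := hdims (aperPart n a) (fun l => mp n a l) (T + 1) hboundAper hboundmp j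
    rw [hdecomp a, hdim] at hsplit
    have hkv' : ∑ l ∈ Finset.range (T + 1), mp n a l * l = k := hkv
    rw [hkv'] at hsplit
    omega
  -- the min of a periodic addition
  have hmpadd : ∀ (b : ℕ → ZMod n → ℕ) (c : ℕ → ℕ), IsMultiseg n b → IsAperiodic n b →
      ∀ l, mp n (addPer n b c) l = c l := by
    intro b c hbms hbap l
    rcases Nat.eq_zero_or_pos l with rfl | hl
    · exact mp_add_const n 0 (hbms.1 0)
    · obtain ⟨i₀, hi₀⟩ := hbap l hl
      exact mp_add_const n i₀ hi₀
  have hpartslt : ∀ (p : Nat.Partition k) (x : ℕ), x ∈ p.parts → x ≤ k := by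
    intro p x hx
    have := Multiset.single_le_sum (fun y _ => Nat.zero_le y) x hx
    rwa [p.parts_sum] at this
  -- backward direction
  have hback : ∀ (p : Nat.Partition k) (b : ℕ → ZMod n → ℕ),
      (IsMultiseg n b ∧ IsAperiodic n b ∧ ∀ j, msegDim n b j + k = γ j) →
      ((IsMultiseg n (addPer n b fun l => p.parts.count l) ∧
          msegDim n (addPer n b fun l => p.parts.count l) = γ) ∧
        kval n T (addPer n b fun l => p.parts.count l) = k) := by
    rintro p b ⟨hbms, hbap, hbdim⟩
    obtain ⟨Lb, hLb⟩ := exists_bound n hbms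
    set c : ℕ → ℕ := fun l => p.parts.count l with hc
    have hc0 : c 0 = 0 := parts_count_zero p
    have hcvan : ∀ l, k + 1 ≤ l → c l = 0 := fun l hl => parts_count_bound p (by omega)
    set L := max Lb (max (T + 1) (k + 1)) with hLdef
    have hkL : k + 1 ≤ L := le_trans (le_max_right _ _) (le_max_right _ _)
    have hbbd : ∀ l, L ≤ l → ∀ i, b l i = 0 :=
      fun l hl i => hLb l (le_trans (le_max_left _ _) hl) i
    have hcbd : ∀ l, L ≤ l → c l = 0 := fun l hl => hcvan l (by omega)
    have hplt : ∀ x ∈ p.parts, x < L := by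
      intro x hx
      have := hpartslt p x hx
      omega
    have hcsum : ∑ l ∈ Finset.range L, c l * l = k := by
      rw [hc, multiset_sum_count p.parts L hplt, p.parts_sum]
    have hdim' : ∀ j, msegDim n (addPer n b c) j = msegDim n b j + k := by
      intro j; rw [hdims b c L hbbd hcbd j, hcsum]
    refine ⟨⟨⟨?_, ?_⟩, ?_⟩, ?_⟩
    · intro i
      show b 0 i + c 0 = 0
      rw [hbms.1 i, hc0]
    · have hsub : {q : ℕ × ZMod n | addPer n b c q.1 q.2 ≠ 0} ⊆
          {q : ℕ × ZMod n | b q.1 q.2 ≠ 0} ∪ (Set.Iic k ×ˢ (Set.univ : Set (ZMod n))) := by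
        intro q hq
        simp only [Set.mem_setOf_eq, addPer] at hq
        by_cases hb0 : b q.1 q.2 = 0
        · right
          refine ⟨?_, trivial⟩
          simp only [hb0, Nat.zero_add] at hq
          by_contra h
          exact hq (hcvan q.1 (by simpa using h))
        · left; exact hb0
      exact (hbms.2.union ((Set.finite_Iic k).prod Set.finite_univ)).subset hsub
    · funext j
      rw [hdim' j, hbdim j]
    · show ∑ l ∈ Finset.range (T + 1), mp n (addPer n b c) l * l = k
      have hplt' : ∀ x ∈ p.parts, x < T + 1 := by
        intro x hx
        have := hpartslt p x hx
        omega
      rw [Finset.sum_congr rfl fun l _ => by rw [hmpadd b c hbms hbap l]]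
      rw [hc, multiset_sum_count p.parts (T + 1) hplt', p.parts_sum]
  -- left inverse
  have hleft : ∀ a : ℕ → ZMod n → ℕ,
      (IsMultiseg n a ∧ msegDim n a = γ) ∧ kval n T a = k →
      addPer n (aperPart n a) (fun l => (partsOf n T a).count l) = a := by
    rintro a ⟨⟨hms, hdim⟩, -⟩
    have hcount : ∀ l, (partsOf n T a).count l = mp n a l :=
      partsOf_count n (fun l' hl' => hmpvan a hms hdim l' hl')
    funext l i
    show aperPart n a l i + (partsOf n T a).count l = a l i
    rw [hcount l]
    exact Nat.sub_add_cancel (mp_le n a l i)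
  -- right inverse
  have hrightp : ∀ (p : Nat.Partition k) (b : ℕ → ZMod n → ℕ),
      IsMultiseg n b → IsAperiodic n b →
      partsOf n T (addPer n b fun l => p.parts.count l) = p.parts := by
    intro p b hbms hbap
    rw [partsOf,
      Finset.sum_congr rfl fun l _ => by
        rw [hmpadd b (fun l => p.parts.count l) hbms hbap l]]
    exact multiset_count_decomp p.parts (T + 1) fun x hx => by
      have := hpartslt p x hx; omega
  have hrighta : ∀ (p : Nat.Partition k) (b : ℕ → ZMod n → ℕ),
      IsMultiseg n b → IsAperiodic n b →
      aperPart n (addPer n b fun l => p.parts.count l) = b := by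
    intro p b hbms hbap
    funext l i
    show addPer n b _ l i - mp n (addPer n b _) l = b l i
    rw [hmpadd b (fun l => p.parts.count l) hbms hbap l]
    show b l i + p.parts.count l - p.parts.count l = b l i
    omega
  -- positivity and sum for the constructed partition
  have hppos : ∀ a : ℕ → ZMod n → ℕ,
      (IsMultiseg n a ∧ msegDim n a = γ) ∧ kval n T a = k →
      ∀ x, x ∈ partsOf n T a → 0 < x := by
    rintro a ⟨⟨hms, -⟩, -⟩ x hx
    rw [partsOf] at hx
    simp only [Multiset.mem_sum] at hx
    obtain ⟨l, -, hx⟩ := hx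
    obtain ⟨hne, hxl⟩ := Multiset.mem_replicate.mp hx
    rcases Nat.eq_zero_or_pos x with hx0 | h
    · exfalso
      apply hne
      rw [← hxl, hx0]
      exact mp_eq_zero_of n 0 (hms.1 0)
    · exact h
  have hpsum : ∀ a : ℕ → ZMod n → ℕ,
      (IsMultiseg n a ∧ msegDim n a = γ) ∧ kval n T a = k →
      (partsOf n T a).sum = k := by
    rintro a ⟨-, hkv⟩
    rw [partsOf_sum]
    exact hkv
  -- the bijection
  rw [← Nat.card_coe_set_eq, ← Nat.card_coe_set_eq]
  have e : ↥{a : ℕ → ZMod n → ℕ | (IsMultiseg n a ∧ msegDim n a = γ) ∧ kval n T a = k} ≃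
      Nat.Partition k × ↥{a : ℕ → ZMod n → ℕ | IsMultiseg n a ∧ IsAperiodic n a ∧
          ∀ j : ZMod n, msegDim n a j + k = γ j} :=
    { toFun := fun x =>
        (⟨partsOf n T x.1, fun {i} hi => hppos x.1 x.2 i hi, hpsum x.1 x.2⟩,
         ⟨aperPart n x.1, hforward x.1 x.2⟩),
      invFun := fun y => ⟨addPer n y.2.1 (fun l => y.1.parts.count l), hback y.1 y.2.1 y.2.2⟩,
      left_inv := fun x => Subtype.ext (hleft x.1 x.2),
      right_inv := fun y => by
        refine Prod.ext ?_ ?_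
        · exact Nat.Partition.ext (hrightp y.1 y.2.1 y.2.2.1 y.2.2.2.1)
        · exact Subtype.ext (hrighta y.1 y.2.1 y.2.2.1 y.2.2.2.1) }
  rw [Nat.card_congr e, Nat.card_prod, Nat.card_eq_fintype_card]

end Stmt6Aux

theorem stmt_6 (n : ℕ) (hn : 2 ≤ n) [NeZero n] (γ : ZMod n → ℕ) :
    { a : ℕ → ZMod n → ℕ | IsMultiseg n a ∧ msegDim n a = γ }.ncard
      = ∑ᶠ k : ℕ, Fintype.card (Nat.Partition k) *
          { a : ℕ → ZMod n → ℕ | IsMultiseg n a ∧ IsAperiodic n a ∧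
              ∀ j : ZMod n, msegDim n a j + k = γ j }.ncard := by
  classical
  set T := ∑ j : ZMod n, γ j with hT
  set S := {a : ℕ → ZMod n → ℕ | IsMultiseg n a ∧ msegDim n a = γ} with hS
  have hfin : S.Finite := Stmt6Aux.finite_dimset n γ
  -- the periodic weight of any element of `S` is at most `T`
  have hkle : ∀ a ∈ S, Stmt6Aux.kval n T a ≤ T := by
    rintro a ⟨hms, hdim⟩
    obtain ⟨La, hLa⟩ := Stmt6Aux.exists_bound n hms
    set L := max La (T + 1) with hL
    have hbd : ∀ l, L ≤ l → ∀ i, a l i = 0 :=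
      fun l hl i => hLa l (le_trans (le_max_left _ _) hl) i
    have htot := Stmt6Aux.total_dim n hbd
    rw [hdim] at htot
    calc Stmt6Aux.kval n T a
        = ∑ l ∈ Finset.range (T + 1), Stmt6Aux.mp n a l * l := rfl
      _ ≤ ∑ l ∈ Finset.range (T + 1), ∑ i : ZMod n, a l i * l := by
            refine Finset.sum_le_sum fun l _ => ?_
            calc Stmt6Aux.mp n a l * l ≤ a l 0 * l :=
                  Nat.mul_le_mul_right _ (Stmt6Aux.mp_le n a l 0)
              _ ≤ ∑ i : ZMod n, a l i * l :=
                  Finset.single_le_sum (f := fun i => a l i * l)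
                    (fun _ _ => Nat.zero_le _) (Finset.mem_univ 0)
      _ ≤ ∑ l ∈ Finset.range L, ∑ i : ZMod n, a l i * l := by
            refine Finset.sum_le_sum_of_subset ?_
            apply Finset.range_subset_range.mpr
            exact le_max_right _ _
      _ = T := htot.symm
  set A : ℕ → Set (ℕ → ZMod n → ℕ) := fun k =>
    {a | IsMultiseg n a ∧ IsAperiodic n a ∧ ∀ j : ZMod n, msegDim n a j + k = γ j} with hA
  have hAempty : ∀ k, T < k → A k = ∅ := by
    intro k hk
    ext a
    simp only [Set.mem_empty_iff_false, iff_false, hA, Set.mem_setOf_eq]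
    rintro ⟨hms, hap, hdim⟩
    have h0 := hdim 0
    have hγ0 : γ 0 ≤ T :=
      Finset.single_le_sum (f := γ) (fun _ _ => Nat.zero_le _) (Finset.mem_univ 0)
    omega
  have hRHS : ∑ᶠ k : ℕ, Fintype.card (Nat.Partition k) * (A k).ncard
      = ∑ k ∈ Finset.range (T + 1), Fintype.card (Nat.Partition k) * (A k).ncard := by
    apply finsum_eq_sum_of_support_subset
    intro k hksup
    simp only [Function.mem_support, ne_eq] at hksup
    by_contra hmem
    simp only [Finset.coe_range, Set.mem_Iio, not_lt] at hmem
    apply hksup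
    rw [hAempty k (by omega)]
    simp
  have hLHS : S.ncard = ∑ k ∈ Finset.range (T + 1),
      {a : ℕ → ZMod n → ℕ | (IsMultiseg n a ∧ msegDim n a = γ) ∧
        Stmt6Aux.kval n T a = k}.ncard := by
    rw [Set.ncard_eq_toFinset_card S hfin]
    rw [Finset.card_eq_sum_card_fiberwise (f := fun a => Stmt6Aux.kval n T a)
      (t := Finset.range (T + 1)) (fun a ha => by
        show Stmt6Aux.kval n T a ∈ Finset.range (T + 1)
        exact Finset.mem_range.mpr
          (Nat.lt_succ_of_le (hkle a (hfin.mem_toFinset.mp ha))))]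
    refine Finset.sum_congr rfl fun k _ => ?_
    have hsub : {a : ℕ → ZMod n → ℕ | (IsMultiseg n a ∧ msegDim n a = γ) ∧
        Stmt6Aux.kval n T a = k} ⊆ S := fun a ha => ha.1
    rw [Set.ncard_eq_toFinset_card _ (hfin.subset hsub)]
    congr 1
    ext a
    simp only [Set.Finite.mem_toFinset, Finset.mem_filter, Set.mem_setOf_eq, hS]
  rw [hLHS, hRHS]
  refine Finset.sum_congr rfl fun k hk => ?_
  exact Stmt6Aux.card_fiber n γ k (by have := Finset.mem_range.mp hk; omega)
end

section
/- Fix integers k ≥ 1 and N ≥ k. Over ℚ, the space of symmetric polynomials in N variables that are homogeneous of degree k is spanned by the complete homogeneous symmetric polynomial h_k together with the products e_l · g, where 1 ≤ l ≤ k−1, e_l is the l-th elementary symmetric polynomial, and g ranges over symmetric polynomials homogeneous of degree k − l. -/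
open MvPolynomial Finset

set_option linter.unusedSectionVars false

namespace Stmt10Aux

variable {σ : Type*} [Fintype σ] [DecidableEq σ] (R : Type*) [CommRing R]

noncomputable def E (s : Finset σ) (l : ℕ) : MvPolynomial σ R :=
  ∑ t ∈ s.powersetCard l, ∏ i ∈ t, X i

noncomputable def H (s : Finset σ) (m : ℕ) : MvPolynomial σ R :=
  ∑ t ∈ s.sym m, (t.1.map X).prod

lemma E_zero (s : Finset σ) : E R s 0 = 1 := by simp [E]

lemma E_empty (l : ℕ) : E R (∅ : Finset σ) (l + 1) = 0 := by
  rw [E, powersetCard_eq_empty.2 (by simp), sum_empty]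

lemma H_zero (s : Finset σ) : H R s 0 = 1 := by
  rw [H, sym_zero, sum_singleton]
  have : (Multiset.map X (((∅ : Sym σ 0)).1) : Multiset (MvPolynomial σ R)) = 0 := rfl
  rw [this, Multiset.prod_zero]

lemma H_empty (m : ℕ) : H R (∅ : Finset σ) (m + 1) = 0 := by simp [H]

lemma E_univ (l : ℕ) : E R (univ : Finset σ) l = esymm σ R l := rfl

lemma H_univ (m : ℕ) : H R (univ : Finset σ) m = hsymm σ R m := by
  rw [H, hsymm, sym_univ]

lemma E_insert {a : σ} {s : Finset σ} (ha : a ∉ s) (l : ℕ) :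
    E R (insert a s) (l + 1) = E R s (l + 1) + X a * E R s l := by
  rw [E, powersetCard_succ_insert ha, sum_union, E, E, mul_sum]
  · congr 1
    rw [sum_image]
    · refine sum_congr rfl fun t ht => ?_
      rw [prod_insert]
      exact fun hat => ha ((mem_powersetCard.1 ht).1 hat)
    · intro t ht u hu he
      have h1 : a ∉ t := fun hat => ha ((mem_powersetCard.1 ht).1 hat)
      have h2 : a ∉ u := fun hau => ha ((mem_powersetCard.1 hu).1 hau)
      rw [← erase_insert h1, ← erase_insert h2, he]
  · rw [disjoint_left]
    intro t ht htu
    rw [mem_image] at htu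
    obtain ⟨u, hu, rfl⟩ := htu
    exact ha ((mem_powersetCard.1 ht).1 (mem_insert_self a u))

lemma H_insert {a : σ} {s : Finset σ} (ha : a ∉ s) (m : ℕ) :
    H R (insert a s) (m + 1) = H R s (m + 1) + X a * H R (insert a s) m := by
  classical
  rw [H, ← sum_filter_add_sum_filter_not ((insert a s).sym (m + 1)) (fun t => a ∈ t)]
  have h1 : ((insert a s).sym (m + 1)).filter (fun t => a ∉ t) = s.sym (m + 1) := by
    ext t
    simp only [mem_filter, mem_sym_iff, mem_insert]
    constructor
    · rintro ⟨h1, h2⟩ b hb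
      rcases h1 b hb with rfl | hbs
      · exact absurd hb h2
      · exact hbs
    · intro h
      exact ⟨fun b hb => Or.inr (h b hb), fun hat => ha (h a hat)⟩
  have h2 : ((insert a s).sym (m + 1)).filter (fun t => a ∈ t)
      = ((insert a s).sym m).image (Sym.cons a) := by
    ext t
    simp only [mem_filter, mem_image, mem_sym_iff]
    constructor
    · rintro ⟨h1, h2⟩
      refine ⟨t.erase a h2, fun b hb => ?_, Sym.cons_erase h2⟩
      have hb' : b ∈ (t.erase a h2 : Multiset σ) := hb
      rw [Sym.coe_erase] at hb'
      exact h1 b (Multiset.mem_of_mem_erase hb')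
    · rintro ⟨u, hu, rfl⟩
      refine ⟨fun b hb => ?_, Sym.mem_cons_self a u⟩
      rcases Sym.mem_cons.1 hb with hba | hbu
      · rw [hba]; exact mem_insert_self a s
      · exact hu b hbu
  rw [add_comm ((((insert a s).sym (m+1)).filter (fun t => a ∈ t)).sum _), h1, h2, sum_image
      (fun u _ v _ h => (Sym.cons_inj_right a u v).1 h)]
  rw [H, H, mul_sum]
  congr 1
  refine sum_congr rfl fun u hu => ?_
  show (Multiset.map X ((a ::ₛ u : Sym σ (m+1)) : Multiset σ)).prod = _
  rw [Sym.coe_cons, Multiset.map_cons, Multiset.prod_cons]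
  rfl


lemma key (s : Finset σ) : ∀ k : ℕ, 1 ≤ k →
    ∑ l ∈ Finset.range (k + 1), (-1 : MvPolynomial σ R) ^ l * E R s l * H R s (k - l) = 0 := by
  induction s using Finset.induction_on with
  | empty =>
    intro k hk
    apply sum_eq_zero
    intro l hl
    rw [mem_range, Nat.lt_succ_iff] at hl
    rcases Nat.eq_zero_or_pos l with rfl | hl0
    · obtain ⟨j, rfl⟩ : ∃ j, k = j + 1 := ⟨k - 1, by omega⟩
      rw [Nat.sub_zero, H_empty, mul_zero]
    · obtain ⟨l', rfl⟩ : ∃ l', l = l' + 1 := ⟨l - 1, by omega⟩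
      rw [E_empty, mul_zero, zero_mul]
  | @insert a s ha ih =>
    intro k hk
    obtain ⟨j, rfl⟩ : ∃ j, k = j + 1 := ⟨k - 1, by omega⟩
    have hG : ∀ j : ℕ,
        ∑ l ∈ Finset.range (j + 2), (-1 : MvPolynomial σ R) ^ l * E R s l * H R (insert a s) (j + 1 - l)
          = (∑ l ∈ Finset.range (j + 2), (-1) ^ l * E R s l * H R s (j + 1 - l))
            + X a * ∑ l ∈ Finset.range (j + 1), (-1) ^ l * E R s l * H R (insert a s) (j - l) := by
      intro j
      rw [Finset.sum_range_succ, Finset.sum_range_succ (fun l => (-1 : MvPolynomial σ R) ^ l * E R s l * H R s (j + 1 - l))]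
      rw [Finset.mul_sum]
      rw [Nat.sub_self]
      simp only [H_zero, mul_one]
      have hsplit : ∀ l ∈ Finset.range (j + 1),
          (-1 : MvPolynomial σ R) ^ l * E R s l * H R (insert a s) (j + 1 - l)
            = (-1) ^ l * E R s l * H R s (j + 1 - l)
              + X a * ((-1) ^ l * E R s l * H R (insert a s) (j - l)) := by
        intro l hl
        rw [mem_range, Nat.lt_succ_iff] at hl
        rw [show j + 1 - l = (j - l) + 1 by omega, H_insert R ha]
        ring
      rw [Finset.sum_congr rfl hsplit, Finset.sum_add_distrib]
      ring
    have hstep : ∑ l ∈ Finset.range (j + 2), (-1 : MvPolynomial σ R) ^ l * E R (insert a s) l * H R (insert a s) (j + 1 - l)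
        = (∑ l ∈ Finset.range (j + 2), (-1) ^ l * E R s l * H R (insert a s) (j + 1 - l))
          - X a * ∑ l ∈ Finset.range (j + 1), (-1) ^ l * E R s l * H R (insert a s) (j - l) := by
      rw [Finset.sum_range_succ' _ (j + 1), Finset.sum_range_succ' (fun l => (-1 : MvPolynomial σ R) ^ l * E R s l * H R (insert a s) (j + 1 - l)) (j + 1)]
      rw [pow_zero, E_zero, E_zero, Finset.mul_sum]
      have hsplit : ∀ l ∈ Finset.range (j + 1),
          (-1 : MvPolynomial σ R) ^ (l + 1) * E R (insert a s) (l + 1) * H R (insert a s) (j + 1 - (l + 1))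
            = (-1) ^ (l + 1) * E R s (l + 1) * H R (insert a s) (j + 1 - (l + 1))
              - X a * ((-1) ^ l * E R s l * H R (insert a s) (j - l)) := by
        intro l hl
        rw [E_insert R ha, show j + 1 - (l + 1) = j - l by omega, pow_succ]
        ring
      rw [Finset.sum_congr rfl hsplit, Finset.sum_sub_distrib]
      ring
    rw [hstep, hG, ih (j + 1) (by omega), zero_add, sub_self]

lemma esymm_hsymm (k : ℕ) (hk : 1 ≤ k) :
    ∑ l ∈ Finset.range (k + 1), (-1 : MvPolynomial σ R) ^ l * esymm σ R l * hsymm σ R (k - l) = 0 := by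
  have := key R (univ : Finset σ) k hk
  simpa only [E_univ, H_univ] using this


lemma multiset_prod_homog (m : Multiset σ) :
    ((m.map (X : σ → MvPolynomial σ R)).prod).IsHomogeneous (Multiset.card m) := by
  induction m using Multiset.induction_on with
  | empty => simpa using isHomogeneous_one σ R
  | cons a m ih =>
    rw [Multiset.map_cons, Multiset.prod_cons, Multiset.card_cons]
    have := (isHomogeneous_X R a).mul ih
    rwa [add_comm] at this

lemma hsymm_homog (n : ℕ) : (hsymm σ R n).IsHomogeneous n := by
  rw [hsymm]
  apply MvPolynomial.IsHomogeneous.sum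
  intro t _
  have := multiset_prod_homog R (t.1 : Multiset σ)
  rwa [t.2] at this

lemma esymm_homog (n : ℕ) : (esymm σ R n).IsHomogeneous n := by
  rw [esymm]
  apply MvPolynomial.IsHomogeneous.sum
  intro t ht
  have h := MvPolynomial.IsHomogeneous.prod t (fun i => (X i : MvPolynomial σ R))
    (fun _ => 1) (fun i _ => isHomogeneous_X R i)
  rwa [Finset.sum_const, smul_eq_mul, mul_one, (mem_powersetCard.1 ht).2] at h

lemma isSymmetric_pow {p : MvPolynomial σ R} (hp : p.IsSymmetric) (n : ℕ) :
    (p ^ n).IsSymmetric := by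
  induction n with
  | zero => simpa using MvPolynomial.IsSymmetric.one
  | succ n ih => rw [pow_succ]; exact ih.mul hp

lemma isSymmetric_prod {ι : Type*} (s : Finset ι) (f : ι → MvPolynomial σ R)
    (h : ∀ i ∈ s, (f i).IsSymmetric) : (∏ i ∈ s, f i).IsSymmetric := by
  refine Finset.prod_induction f _ (fun _ _ => MvPolynomial.IsSymmetric.mul) MvPolynomial.IsSymmetric.one h

/-- the span property in the theorem -/
def Ok (k N : ℕ) (p : MvPolynomial (Fin N) ℚ) : Prop :=
  ∃ (c : ℚ) (g : ℕ → MvPolynomial (Fin N) ℚ),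
    (∀ l ∈ Finset.Ico 1 k, (g l).IsSymmetric ∧ (g l).IsHomogeneous (k - l)) ∧
    p = c • hsymm (Fin N) ℚ k + ∑ l ∈ Finset.Ico 1 k, esymm (Fin N) ℚ l * g l

lemma ok_zero (k N : ℕ) : Ok k N 0 := by
  refine ⟨0, fun _ => 0, fun l _ => ⟨MvPolynomial.IsSymmetric.zero, isHomogeneous_zero _ _ _⟩, ?_⟩
  simp

lemma ok_add {k N : ℕ} {p q : MvPolynomial (Fin N) ℚ} (hp : Ok k N p) (hq : Ok k N q) :
    Ok k N (p + q) := by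
  obtain ⟨c1, g1, hg1, rfl⟩ := hp
  obtain ⟨c2, g2, hg2, rfl⟩ := hq
  refine ⟨c1 + c2, fun l => g1 l + g2 l, fun l hl => ⟨(hg1 l hl).1.add (hg2 l hl).1,
    (hg1 l hl).2.add (hg2 l hl).2⟩, ?_⟩
  have hs : ∑ l ∈ Finset.Ico 1 k, esymm (Fin N) ℚ l * (g1 l + g2 l)
      = (∑ l ∈ Finset.Ico 1 k, esymm (Fin N) ℚ l * g1 l)
        + ∑ l ∈ Finset.Ico 1 k, esymm (Fin N) ℚ l * g2 l := by
    rw [← Finset.sum_add_distrib]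
    exact Finset.sum_congr rfl fun x _ => mul_add _ _ _
  simp only []
  rw [hs, add_smul]
  ring

set_option maxHeartbeats 1000000 in
lemma ok_smul {k N : ℕ} {p : MvPolynomial (Fin N) ℚ} (r : ℚ) (hp : Ok k N p) :
    Ok k N (C r * p) := by
  obtain ⟨c, g, hg, rfl⟩ := hp
  refine ⟨r * c, fun l => C r * g l, fun l hl => ⟨(MvPolynomial.IsSymmetric.C r).mul (hg l hl).1,
    (hg l hl).2.C_mul r⟩, ?_⟩
  simp only []
  rw [mul_add, Finset.mul_sum, smul_eq_C_mul, smul_eq_C_mul, map_mul]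
  congr 1
  · ring
  · exact Finset.sum_congr rfl fun x _ => by ring


lemma ok_mul_esymm {k N : ℕ} (l : ℕ) (hl : l ∈ Finset.Ico 1 k) {g : MvPolynomial (Fin N) ℚ}
    (hgs : g.IsSymmetric) (hgh : g.IsHomogeneous (k - l)) :
    Ok k N (esymm (Fin N) ℚ l * g) := by
  classical
  refine ⟨0, fun j => if j = l then g else 0, fun j hj => ?_, ?_⟩
  · by_cases h : j = l
    · subst h; simp only [if_pos rfl]; exact ⟨hgs, hgh⟩
    · simp only [if_neg h]; exact ⟨MvPolynomial.IsSymmetric.zero, isHomogeneous_zero _ _ _⟩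
  · rw [zero_smul, zero_add]
    rw [Finset.sum_eq_single_of_mem l hl]
    · simp
    · intro j _ hj
      simp [hj]

lemma ok_esymm_k {k N : ℕ} (hk : 1 ≤ k) : Ok k N (esymm (Fin N) ℚ k) := by
  have h0 := esymm_hsymm (σ := Fin N) ℚ k hk
  rw [Finset.sum_range_succ, Nat.sub_self, hsymm_zero, mul_one] at h0
  have hsq : ((-1 : MvPolynomial (Fin N) ℚ)) ^ k * (-1) ^ k = 1 := by
    rw [← pow_add, ← two_mul, pow_mul, neg_one_sq, one_pow]
  have h1 : esymm (Fin N) ℚ k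
      = -((-1 : MvPolynomial (Fin N) ℚ) ^ k
          * ∑ l ∈ Finset.range k, (-1) ^ l * esymm (Fin N) ℚ l * hsymm (Fin N) ℚ (k - l)) := by
    have h2 := congrArg (fun x => (-1 : MvPolynomial (Fin N) ℚ) ^ k * x) h0
    simp only [mul_add, mul_zero] at h2
    rw [← mul_assoc, hsq, one_mul] at h2
    exact eq_neg_of_add_eq_zero_right h2
  rw [Finset.range_eq_Ico, Finset.sum_eq_sum_Ico_succ_bot hk] at h1
  rw [pow_zero, one_mul, esymm_zero, one_mul, Nat.sub_zero] at h1
  refine ⟨(-1 : ℚ) ^ (k + 1), fun l => ((-1 : ℚ) ^ (k + 1 + l)) • hsymm (Fin N) ℚ (k - l),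
    fun l hl => ⟨(hsymm_isSymmetric (Fin N) ℚ (k - l)).smul _, ?_⟩, ?_⟩
  · show ((-1 : ℚ) ^ (k + 1 + l) • hsymm (Fin N) ℚ (k - l)).IsHomogeneous (k - l)
    rw [smul_eq_C_mul]
    exact (hsymm_homog ℚ (k - l)).C_mul _
  · simp only []
    rw [h1, mul_add, neg_add, Finset.mul_sum, ← Finset.sum_neg_distrib, zero_add]
    congr 1
    · rw [smul_eq_C_mul, map_pow, map_neg, map_one, pow_succ]
      ring
    · refine Finset.sum_congr rfl fun l _ => ?_
      rw [smul_eq_C_mul, map_pow, map_neg, map_one]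
      rw [show k + 1 + l = (k + l) + 1 by omega, pow_succ, pow_add]
      ring

end Stmt10Aux


open Stmt10Aux

theorem stmt_10 (k N : ℕ) (hk : 1 ≤ k) (hN : k ≤ N)
    (f : MvPolynomial (Fin N) ℚ) (hfsym : f.IsSymmetric)
    (hfhom : f.IsHomogeneous k) :
    ∃ (c : ℚ) (g : ℕ → MvPolynomial (Fin N) ℚ),
      (∀ l ∈ Finset.Ico 1 k, (g l).IsSymmetric ∧ (g l).IsHomogeneous (k - l)) ∧
      f = c • hsymm (Fin N) ℚ k + ∑ l ∈ Finset.Ico 1 k, esymm (Fin N) ℚ l * g l := by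
  classical
  suffices h : Ok k N f by
    obtain ⟨c, g, hg, hf⟩ := h
    exact ⟨c, g, hg, hf⟩
  obtain ⟨P, hP⟩ := MvPolynomial.esymmAlgHom_fin_surjective (R := ℚ) (n := N) (m := N)
    le_rfl ⟨f, hfsym⟩
  have hf' : f = aeval (fun i : Fin N => esymm (Fin N) ℚ ((i : ℕ) + 1)) P := by
    have h2 := congrArg Subtype.val hP
    rw [esymmAlgHom_apply] at h2
    exact h2.symm
  have hsum : f = ∑ d ∈ P.support,
      MvPolynomial.C (coeff d P) * (d.prod fun i m => (esymm (Fin N) ℚ ((i : ℕ) + 1)) ^ m) := by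
    conv_lhs => rw [hf', P.as_sum, map_sum]
    refine Finset.sum_congr rfl fun d _ => ?_
    rw [aeval_monomial, algebraMap_eq]
  have hq : ∀ d : Fin N →₀ ℕ, (d.prod fun i m => (esymm (Fin N) ℚ ((i : ℕ) + 1)) ^ m).IsHomogeneous
      (∑ i ∈ d.support, ((i : ℕ) + 1) * d i) := by
    intro d
    rw [Finsupp.prod]
    exact MvPolynomial.IsHomogeneous.prod _ _ _ (fun i _ => (esymm_homog ℚ ((i : ℕ) + 1)).pow (d i))
  have hcomp : f = ∑ d ∈ P.support, MvPolynomial.C (coeff d P) *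
      (if k = ∑ i ∈ d.support, ((i : ℕ) + 1) * d i
        then (d.prod fun i m => (esymm (Fin N) ℚ ((i : ℕ) + 1)) ^ m) else 0) := by
    have h1 : homogeneousComponent k f = f := by
      rw [homogeneousComponent_of_mem ((mem_homogeneousSubmodule _ _).2 hfhom), if_pos rfl]
    conv_lhs => rw [← h1, hsum]
    rw [map_sum]
    refine Finset.sum_congr rfl fun d _ => ?_
    rw [homogeneousComponent_C_mul,
      homogeneousComponent_of_mem ((mem_homogeneousSubmodule _ _).2 (hq d))]
  rw [hcomp]
  refine Finset.sum_induction _ (Ok k N) (fun a b ha hb => ok_add ha hb) (ok_zero k N)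
    (fun d _ => ?_)
  by_cases hw : k = ∑ i ∈ d.support, ((i : ℕ) + 1) * d i
  · rw [if_pos hw]
    obtain ⟨i, hi, hine⟩ : ∃ i ∈ d.support, ((i : ℕ) + 1) * d i ≠ 0 := by
      apply Finset.exists_ne_zero_of_sum_ne_zero
      omega
    have hdi : d i ≠ 0 := Finsupp.mem_support_iff.1 hi
    obtain ⟨a, ha⟩ : ∃ a, d i = a + 1 := ⟨d i - 1, by omega⟩
    set rest := (esymm (Fin N) ℚ ((i : ℕ) + 1)) ^ a
        * ∏ j ∈ d.support.erase i, (esymm (Fin N) ℚ ((j : ℕ) + 1)) ^ d j with hrest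
    have hprod : (d.prod fun j m => (esymm (Fin N) ℚ ((j : ℕ) + 1)) ^ m)
        = esymm (Fin N) ℚ ((i : ℕ) + 1) * rest := by
      rw [hrest, Finsupp.prod, ← Finset.mul_prod_erase _ _ hi, ha, pow_succ']
      ring
    have hwsplit : (∑ j ∈ d.support, ((j : ℕ) + 1) * d j)
        = ((i : ℕ) + 1) * a + ((i : ℕ) + 1)
          + ∑ j ∈ d.support.erase i, ((j : ℕ) + 1) * d j := by
      rw [← Finset.add_sum_erase _ _ hi, ha, Nat.mul_succ]
    have hrs : rest.IsSymmetric :=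
      (isSymmetric_pow ℚ (esymm_isSymmetric (Fin N) ℚ _) a).mul
        (isSymmetric_prod ℚ _ _ (fun j _ => isSymmetric_pow ℚ (esymm_isSymmetric (Fin N) ℚ _) _))
    have hrh : rest.IsHomogeneous (((i : ℕ) + 1) * a
        + ∑ j ∈ d.support.erase i, ((j : ℕ) + 1) * d j) :=
      ((esymm_homog ℚ ((i : ℕ) + 1)).pow a).mul
        (MvPolynomial.IsHomogeneous.prod _ _ _ (fun j _ => (esymm_homog ℚ ((j : ℕ) + 1)).pow (d j)))
    have hik : (i : ℕ) + 1 ≤ k := by omega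
    rcases eq_or_lt_of_le hik with heq | hlt
    · have h0 : ((i : ℕ) + 1) * a + ∑ j ∈ d.support.erase i, ((j : ℕ) + 1) * d j = 0 := by omega
      rw [h0] at hrh
      have hrestC : rest = MvPolynomial.C (coeff 0 rest) := by
        have h3 := homogeneousComponent_of_mem (m := 0)
          ((mem_homogeneousSubmodule _ _).2 hrh)
        rw [if_pos rfl] at h3
        conv_lhs => rw [← h3]
        rw [homogeneousComponent_zero]
      have h4 : MvPolynomial.C (coeff d P) * (esymm (Fin N) ℚ ((i : ℕ) + 1) * rest)
          = MvPolynomial.C (coeff d P * coeff 0 rest) * esymm (Fin N) ℚ k := by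
        rw [heq]
        conv_lhs => rw [hrestC]
        rw [map_mul]
        ring
      rw [hprod, h4]
      exact ok_smul _ (ok_esymm_k hk)
    · have hdeg : ((i : ℕ) + 1) * a + ∑ j ∈ d.support.erase i, ((j : ℕ) + 1) * d j
          = k - ((i : ℕ) + 1) := by omega
      rw [hdeg] at hrh
      rw [hprod]
      exact ok_smul _ (ok_mul_esymm ((i : ℕ) + 1) (Finset.mem_Ico.2 ⟨by omega, hlt⟩) hrs hrh)
  · rw [if_neg hw, mul_zero]
    exact ok_zero k N
end

section
/- Let k ≥ 1 and let α be a ℚ-valued function on the set of partitions of k. Suppose that α((k)) = 0 (the value on the one-row partition is zero) and that for every 1 ≤ l ≤ k and every partition μ of k − l, ∑_{σ} α(σ) = 0, where the sum is over all partitions σ of k containing μ such that σ/μ is a vertical strip (σ_i − μ_i ≤ 1 for all i). Then α is identically zero. -/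
/-!
Removing the first column of a partition `σ` with `m` parts leaves a partition `μ` of `k - m`,
and among the vertical strips `τ / μ` of size `m`, `τ = σ` is the only one in which `τ` has at
most `m` parts. The equation of the system for `(m, μ)` therefore expresses `α σ` through values
of `α` at partitions with more parts, and downward induction on the number of parts makes `α`
vanish.
-/

/-- `IsPartitionOf k σ`: `σ` is a partition of `k`, written as an antitone,
eventually-zero sequence of parts summing to `k`. -/
def IsPartitionOf (k : ℕ) (σ : ℕ → ℕ) : Prop :=
  Antitone σ ∧ (∃ N, ∀ i ≥ N, σ i = 0) ∧ ∑ᶠ i, σ i = k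

open Function Set

theorem Antitone.exists_support_eq_Iio {σ : ℕ → ℕ} (hσ : Antitone σ) (hzero : ∃ n, σ n = 0) :
    ∃ m, support σ = Iio m := by
  classical
  refine ⟨Nat.find hzero, Set.ext fun i => ?_⟩
  simp only [mem_support, mem_Iio, ne_eq]
  refine ⟨fun hi => lt_of_not_ge fun hle => hi ?_, fun hi => Nat.find_min hzero hi⟩
  exact Nat.eq_zero_of_le_zero (Nat.find_spec hzero ▸ hσ hle)

theorem finsum_mem_eq_single_of_mem {ι M : Type*} [AddCommMonoid M] {s : Set ι} {f : ι → M}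
    {a : ι} (ha : a ∈ s) (hf : ∀ x ∈ s, x ≠ a → f x = 0) : ∑ᶠ x ∈ s, f x = f a := by
  classical
  have hsupp : s ∩ support f ⊆ ({a} : Finset ι) := fun x ⟨hx, hfx⟩ =>
    Finset.mem_singleton.mpr (by_contra fun hne => hfx (hf x hx hne))
  rw [finsum_mem_eq_sum_of_subset f hsupp (by simpa using ha), Finset.sum_singleton]

theorem apply_eq_zero_iff_of_support_eq_Iio {M : Type*} [Zero M] {f : ℕ → M} {m i : ℕ}
    (hm : support f = Iio m) : f i = 0 ↔ m ≤ i := by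
  rw [← not_lt, ← mem_Iio, ← hm, mem_support, not_not]

theorem one_le_apply_of_support_eq_Iio {σ : ℕ → ℕ} {m i : ℕ} (hm : support σ = Iio m)
    (hi : i < m) : 1 ≤ σ i :=
  Nat.one_le_iff_ne_zero.mpr fun h => (apply_eq_zero_iff_of_support_eq_Iio hm).mp h |>.not_gt hi

namespace IsPartitionOf

variable {k m : ℕ} {σ τ : ℕ → ℕ}

theorem exists_support_eq_Iio (hσ : IsPartitionOf k σ) : ∃ m, support σ = Iio m :=
  hσ.1.exists_support_eq_Iio (hσ.2.1.imp fun N hN => hN N le_rfl)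

theorem sum_range_of_support_subset (hσ : IsPartitionOf k σ) (hm : support σ ⊆ Iio m) :
    ∑ i ∈ Finset.range m, σ i = k := by
  rw [← hσ.2.2, finsum_eq_sum_of_support_subset σ (s := Finset.range m) (by simpa using hm)]

theorem sum_range (hσ : IsPartitionOf k σ) (hm : support σ = Iio m) :
    ∑ i ∈ Finset.range m, σ i = k :=
  hσ.sum_range_of_support_subset hm.subset

theorem length_le (hσ : IsPartitionOf k σ) (hm : support σ = Iio m) : m ≤ k := by
  simpa [hσ.sum_range hm] using
    Finset.sum_le_sum fun i hi => one_le_apply_of_support_eq_Iio hm (Finset.mem_range.mp hi)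

theorem length_pos (hσ : IsPartitionOf k σ) (hm : support σ = Iio m) (hk : 0 < k) : 0 < m := by
  rw [Nat.pos_iff_ne_zero]
  rintro rfl
  simp [← hσ.sum_range hm] at hk

theorem tsub_one (hσ : IsPartitionOf k σ) (hm : support σ = Iio m) :
    IsPartitionOf (k - m) (fun i => σ i - 1) := by
  refine ⟨fun i j hij => Nat.sub_le_sub_right (hσ.1 hij) 1,
    hσ.2.1.imp fun N hN i hi => by simp [hN i hi], ?_⟩
  have hsupp : support (fun i => σ i - 1) ⊆ Finset.range m := fun i hi => by
    simp only [Finset.coe_range, ← hm]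
    exact fun h => hi (by simp [h])
  rw [finsum_eq_sum_of_support_subset _ hsupp, Finset.sum_tsub_distrib _
    fun i hi => one_le_apply_of_support_eq_Iio hm (Finset.mem_range.mp hi), hσ.sum_range hm]
  simp

theorem eq_of_le (hσ : IsPartitionOf k σ) (hτ : IsPartitionOf k τ) (hle : ∀ i, τ i ≤ σ i) :
    τ = σ := by
  obtain ⟨m, hm⟩ := hσ.exists_support_eq_Iio
  have hτm : support τ ⊆ Iio m := fun i hi => by
    rw [← hm, mem_support] at *
    exact fun h => hi (by have := hle i; omega)
  have hrange := (Finset.sum_eq_sum_iff_of_le fun i _ => hle i).mp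
    ((hτ.sum_range_of_support_subset hτm).trans (hσ.sum_range hm).symm)
  funext i
  by_cases hi : i < m
  · exact hrange i (Finset.mem_range.mpr hi)
  · have hσi : σ i = 0 := (apply_eq_zero_iff_of_support_eq_Iio hm).mpr (not_lt.mp hi)
    have := hle i
    omega

theorem eq_of_strip_of_apply_eq_zero (hσ : IsPartitionOf k σ) (hm : support σ = Iio m)
    (hτ : IsPartitionOf k τ) (hstrip : ∀ i, τ i ≤ σ i - 1 + 1) (hτm : τ m = 0) : τ = σ := by
  refine hσ.eq_of_le hτ fun i => ?_
  by_cases hi : i < m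
  · have := one_le_apply_of_support_eq_Iio hm hi
    have := hstrip i
    omega
  · have := hτ.1 (not_lt.mp hi)
    omega

end IsPartitionOf

theorem stmt_15_general (k : ℕ) (hk : 1 ≤ k) (α : (ℕ → ℕ) → ℚ)
    (hsys : ∀ l : ℕ, 1 ≤ l → l ≤ k → ∀ μ : ℕ → ℕ, IsPartitionOf (k - l) μ →
      (∑ᶠ σ ∈ { σ : ℕ → ℕ | IsPartitionOf k σ ∧ ∀ i, μ i ≤ σ i ∧ σ i ≤ μ i + 1 },
        α σ) = 0) :
    ∀ σ : ℕ → ℕ, IsPartitionOf k σ → α σ = 0 := by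
  intro σ hσ
  obtain ⟨m, hm⟩ := hσ.exists_support_eq_Iio
  induction hd : k - m using Nat.strong_induction_on generalizing σ m with
  | _ d ih =>
  have hstrip := hsys m (hσ.length_pos hm hk) (hσ.length_le hm) _ (hσ.tsub_one hm)
  refine (finsum_mem_eq_single_of_mem ?_ ?_).symm.trans hstrip
  · exact ⟨hσ, fun i => by omega⟩
  rintro τ ⟨hτ, hτstrip⟩ hne
  obtain ⟨m', hm'⟩ := hτ.exists_support_eq_Iio
  have hlt : m < m' := by
    by_contra! hle
    exact hne (hσ.eq_of_strip_of_apply_eq_zero hm hτ (fun i => (hτstrip i).2)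
      ((apply_eq_zero_iff_of_support_eq_Iio hm').mpr hle))
  exact ih (k - m') (by have := hτ.length_le hm'; omega) τ hτ m' hm' rfl

theorem stmt_15 (k : ℕ) (hk : 1 ≤ k) (α : (ℕ → ℕ) → ℚ)
    (hrow : α (fun i => if i = 0 then k else 0) = 0)
    (hsys : ∀ l : ℕ, 1 ≤ l → l ≤ k → ∀ μ : ℕ → ℕ, IsPartitionOf (k - l) μ →
      (∑ᶠ σ ∈ { σ : ℕ → ℕ | IsPartitionOf k σ ∧ ∀ i, μ i ≤ σ i ∧ σ i ≤ μ i + 1 },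
        α σ) = 0) :
    ∀ σ : ℕ → ℕ, IsPartitionOf k σ → α σ = 0 :=
  stmt_15_general k hk α hsys
end
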